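/- Let A = (a_{ij}) ∈ (𝕊max^∨)^{n×n} be TPD with diagonal entries γ₁ ⪰ γ₂ ⪰ ⋯ ⪰ γₙ (γ_i = a_{ii}), fix k ∈ [n], and set B_k = γ_k ⊙ I ⊖ A. Then every diagonal entry of (B_k)^adj is nonzero; ((B_k)^adj)_{ii} ∈ 𝕊max° for every i ≠ k; and ((B_k)^adj)_{kk} ∈ 𝕊max° if and only if γ_k is not simple, i.e. γ_j = γ_k for some j ≠ k. -/

import Mathlib

/-!
Common framework: the symmetrized tropical semiring 𝕊max over a linearly
ordered abelian group Γ, represented concretely: an element is either 𝟘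
(represented by `none`) or a pair of a modulus `c : Γ` and a sign
(positive, negative or balanced), matching the classes of the quotient
𝕋max²/ℛ described in the paper.
-/

namespace TropPaper

inductive SSign : Type
  | pos
  | neg
  | bal
  deriving DecidableEq

/-- The symmetrized tropical semiring 𝕊max(Γ): `none` is 𝟘, and
`some (c, s)` is the class of modulus `c` and sign `s`. -/
def Smax (Γ : Type) : Type := Option (Γ × SSign)

/-- Γ is divisible. -/
def DivisibleGrp (Γ : Type) [AddCommGroup Γ] : Prop :=
  ∀ k : ℕ, 0 < k → ∀ a : Γ, ∃ b : Γ, k • b = a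

section Defs

variable {Γ : Type} [AddCommGroup Γ] [LinearOrder Γ] [IsOrderedAddMonoid Γ]

/-- 𝟘 -/
def szero : Smax Γ := none

/-- 𝟙 -/
def sone : Smax Γ := some ((0 : Γ), SSign.pos)

/-- modulus |·| : 𝕊max → 𝕋max = WithBot Γ -/
def smod : Smax Γ → WithBot Γ
  | none => ⊥
  | some (c, _) => (c : WithBot Γ)

def sgnMul : SSign → SSign → SSign
  | SSign.pos, t => t
  | SSign.neg, SSign.pos => SSign.neg
  | SSign.neg, SSign.neg => SSign.pos
  | SSign.neg, SSign.bal => SSign.bal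
  | SSign.bal, _ => SSign.bal

/-- ⊕ on 𝕊max -/
def sadd : Smax Γ → Smax Γ → Smax Γ
  | none, b => b
  | some a, none => some a
  | some (c, s), some (d, t) =>
      if c < d then some (d, t)
      else if d < c then some (c, s)
      else some (c, if s = t then s else SSign.bal)

/-- ⊖ (unary) on 𝕊max -/
def sneg : Smax Γ → Smax Γ
  | none => none
  | some (c, SSign.pos) => some (c, SSign.neg)
  | some (c, SSign.neg) => some (c, SSign.pos)
  | some (c, SSign.bal) => some (c, SSign.bal)

/-- ⊙ on 𝕊max -/
def smul : Smax Γ → Smax Γ → Smax Γ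
  | none, _ => none
  | some _, none => none
  | some (c, s), some (d, t) => some (c + d, sgnMul s t)

/-- a ⊖ b -/
def ssub (a b : Smax Γ) : Smax Γ := sadd a (sneg b)

/-- a° = a ⊖ a -/
def sbal (a : Smax Γ) : Smax Γ := ssub a a

/-- the positive element with the same modulus (|·| seen inside 𝕊max⊕) -/
def sabs : Smax Γ → Smax Γ
  | none => none
  | some (c, _) => some (c, SSign.pos)

/-- multiplicative inverse (of invertible, i.e. signed nonzero, elements) -/
def sinv : Smax Γ → Smax Γ
  | none => none
  | some (c, s) => some (-c, s)

/-- a^{⊙k} -/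
def spow (a : Smax Γ) : ℕ → Smax Γ
  | 0 => sone
  | k + 1 => smul a (spow a k)

/-- membership in 𝕊max° (balanced elements together with 𝟘) -/
def IsBal : Smax Γ → Prop
  | none => True
  | some (_, s) => s = SSign.bal

/-- membership in 𝕊max⊕ (positive elements together with 𝟘) -/
def IsPos : Smax Γ → Prop
  | none => True
  | some (_, s) => s = SSign.pos

/-- membership in 𝕊max^∨ (signed elements) -/
def IsSigned : Smax Γ → Prop
  | none => True
  | some (_, s) => s ≠ SSign.bal

/-- the balance relation a ∇ b -/
def Balance (a b : Smax Γ) : Prop := IsBal (ssub a b)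

/-- a ⪯ b -/
def natLe (a b : Smax Γ) : Prop := sadd a b = b

/-- a ≤ b :⟺ b ⊖ a ∈ 𝕊max⊕ ∪ 𝕊max° -/
def sle (a b : Smax Γ) : Prop := IsPos (ssub b a) ∨ IsBal (ssub b a)

/-- a < b :⟺ b ⊖ a ∈ 𝕊max⊕ ∖ {𝟘} -/
def slt (a b : Smax Γ) : Prop := IsPos (ssub b a) ∧ ssub b a ≠ szero

/-- finite ⊕-sum over a list -/
def sumS {α : Type} (l : List α) (f : α → Smax Γ) : Smax Γ :=
  (l.map f).foldr sadd szero

/-- finite ⊙-product over a list -/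
def prodS {α : Type} (l : List α) (f : α → Smax Γ) : Smax Γ :=
  (l.map f).foldr smul sone

/-- the zero vector -/
def zeroVecS {n : ℕ} : Fin n → Smax Γ := fun _ => szero

def VecSigned {n : ℕ} (x : Fin n → Smax Γ) : Prop := ∀ i, IsSigned (x i)

def MatSigned {n : ℕ} (A : Matrix (Fin n) (Fin n) (Smax Γ)) : Prop :=
  ∀ i j, IsSigned (A i j)

def SymmS {n : ℕ} (A : Matrix (Fin n) (Fin n) (Smax Γ)) : Prop :=
  ∀ i j, A i j = A j i

/-- A ⊙ v -/
def matVecS {n : ℕ} (A : Matrix (Fin n) (Fin n) (Smax Γ)) (v : Fin n → Smax Γ) :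
    Fin n → Smax Γ :=
  fun i => sumS (List.finRange n) fun j => smul (A i j) (v j)

/-- A ⊙ B -/
def matMulS {n : ℕ} (A B : Matrix (Fin n) (Fin n) (Smax Γ)) :
    Matrix (Fin n) (Fin n) (Smax Γ) :=
  Matrix.of fun i j => sumS (List.finRange n) fun l => smul (A i l) (B l j)

/-- the identity matrix I -/
def idMatS {n : ℕ} : Matrix (Fin n) (Fin n) (Smax Γ) :=
  Matrix.of fun i j => if i = j then sone else szero

/-- xᵀ ⊙ A ⊙ x -/
def quadFormS {n : ℕ} (A : Matrix (Fin n) (Fin n) (Smax Γ)) (x : Fin n → Smax Γ) :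
    Smax Γ :=
  sumS (List.finRange n) fun i => sumS (List.finRange n) fun j =>
    smul (x i) (smul (A i j) (x j))

/-- tropical positive definiteness (the quadratic-form condition) -/
def TPD {n : ℕ} (A : Matrix (Fin n) (Fin n) (Smax Γ)) : Prop :=
  ∀ x : Fin n → Smax Γ, VecSigned x → x ≠ zeroVecS → slt szero (quadFormS A x)

/-- tropical positive semidefiniteness -/
def TPSD {n : ℕ} (A : Matrix (Fin n) (Fin n) (Smax Γ)) : Prop :=
  ∀ x : Fin n → Smax Γ, VecSigned x → x ≠ zeroVecS → sle szero (quadFormS A x)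

/-- sgn(π) ∈ {𝟙, ⊖𝟙} -/
def permSignS {n : ℕ} (π : Equiv.Perm (Fin n)) : Smax Γ :=
  if (Equiv.Perm.sign π : ℤ) = 1 then sone else sneg sone

/-- the determinant over 𝕊max -/
noncomputable def detS {n : ℕ} (M : Matrix (Fin n) (Fin n) (Smax Γ)) : Smax Γ :=
  sumS (Finset.univ : Finset (Equiv.Perm (Fin n))).toList fun π =>
    smul (permSignS π) (prodS (List.finRange n) fun i => M i (π i))

/-- the adjugate matrix over 𝕊max -/
noncomputable def adjS {n : ℕ} (M : Matrix (Fin (n+1)) (Fin (n+1)) (Smax Γ)) :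
    Matrix (Fin (n+1)) (Fin (n+1)) (Smax Γ) :=
  Matrix.of fun i j =>
    smul (spow (sneg sone) (i.val + j.val))
      (detS (Matrix.of fun a b : Fin n => M (Fin.succAbove j a) (Fin.succAbove i b)))

/-- γ ⊙ I ⊖ A -/
def charMatS {n : ℕ} (γ : Smax Γ) (A : Matrix (Fin n) (Fin n) (Smax Γ)) :
    Matrix (Fin n) (Fin n) (Smax Γ) :=
  Matrix.of fun i j => ssub (smul γ (idMatS i j)) (A i j)

/-- tr_k(A) = ⊕_{|K| = k} det(A[K,K]) -/
noncomputable def trkS {n : ℕ} (k : ℕ) (A : Matrix (Fin n) (Fin n) (Smax Γ)) : Smax Γ :=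
  sumS ((Finset.univ : Finset (Fin n)).powersetCard k).attach.toList fun K =>
    detS (Matrix.of fun a b : Fin k =>
      A (K.1.orderEmbOfFin (Finset.mem_powersetCard.mp K.2).2 a)
        (K.1.orderEmbOfFin (Finset.mem_powersetCard.mp K.2).2 b))

/-- matrix power A^{⊙k} -/
def matPowS {n : ℕ} (A : Matrix (Fin n) (Fin n) (Smax Γ)) :
    ℕ → Matrix (Fin n) (Fin n) (Smax Γ)
  | 0 => idMatS
  | k + 1 => matMulS A (matPowS A k)

/-- partial Kleene sums I ⊕ A ⊕ ⋯ ⊕ A^{⊙m} -/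
def starPartialS {n : ℕ} (A : Matrix (Fin n) (Fin n) (Smax Γ)) (m : ℕ) :
    Matrix (Fin n) (Fin n) (Smax Γ) :=
  Matrix.of fun i j => sumS (List.range (m+1)) fun k => matPowS A k i j

/-- the diagonal matrix D^(k) with diagonal (γ₁,…,γ_{k−1},𝟘,…,𝟘) (0-based k) -/
def DmatS {n : ℕ} (A : Matrix (Fin n) (Fin n) (Smax Γ)) (k : Fin n) :
    Matrix (Fin n) (Fin n) (Smax Γ) :=
  Matrix.of fun i j => if i = j ∧ i < k then A i i else szero

/-- the complementary matrix A^(k) -/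
def AmatS {n : ℕ} (A : Matrix (Fin n) (Fin n) (Smax Γ)) (k : Fin n) :
    Matrix (Fin n) (Fin n) (Smax Γ) :=
  Matrix.of fun i j => if i ≠ j ∨ k ≤ i then A i j else szero

/-- M = (γ⊙I ⊖ D^(k))^{⊙−1} ⊙ A^(k) -/
def MmatS {n : ℕ} (A : Matrix (Fin n) (Fin n) (Smax Γ)) (k : Fin n) :
    Matrix (Fin n) (Fin n) (Smax Γ) :=
  Matrix.of fun i j =>
    smul (sinv (if i < k then sneg (A i i) else A k k)) (AmatS A k i j)

/-- λ_k = (⊖𝟙)^{⊙(k−1)} ⊙ γ₁ ⊙ ⋯ ⊙ γ_{k−1} ⊙ γ^{⊙(n−k)} (0-based k, size n) -/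
def lamkS {n : ℕ} (A : Matrix (Fin n) (Fin n) (Smax Γ)) (k : Fin n) : Smax Γ :=
  smul (spow (sneg sone) k.val)
    (smul (prodS ((List.finRange n).filter (fun i => i < k)) fun i => A i i)
      (spow (A k k) (n - 1 - k.val)))

/-- irreducibility: the digraph of nonzero entries is strongly connected -/
def IrreducibleS {n : ℕ} (A : Matrix (Fin n) (Fin n) (Smax Γ)) : Prop :=
  ∀ i j : Fin n, Relation.ReflTransGen (fun a b => A a b ≠ szero) i j

/-- diagonal entries sorted non-increasingly for ⪯ -/
def DiagSortedS {n : ℕ} (A : Matrix (Fin n) (Fin n) (Smax Γ)) : Prop :=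
  ∀ i j : Fin n, i ≤ j → natLe (A j j) (A i i)

/-! 𝕋max-side notions (for the characteristic polynomial of |A|). -/

/-- finite max over a list in 𝕋max -/
def sumT {α : Type} (l : List α) (f : α → WithBot Γ) : WithBot Γ :=
  (l.map f).foldr max ⊥

/-- finite ⊙-product over a list in 𝕋max -/
def prodT {α : Type} (l : List α) (f : α → WithBot Γ) : WithBot Γ :=
  (l.map f).foldr (· + ·) (0 : WithBot Γ)

/-- the permanent over 𝕋max -/
noncomputable def perT {n : ℕ} (M : Matrix (Fin n) (Fin n) (WithBot Γ)) : WithBot Γ :=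
  sumT (Finset.univ : Finset (Equiv.Perm (Fin n))).toList fun π =>
    prodT (List.finRange n) fun i => M i (π i)

/-- coefficient of X^k in the 𝕋max-characteristic polynomial of B -/
noncomputable def charCoeffT {n : ℕ} (B : Matrix (Fin n) (Fin n) (WithBot Γ)) (k : ℕ) : WithBot Γ :=
  if k ≤ n then
    sumT ((Finset.univ : Finset (Fin n)).powersetCard (n - k)).attach.toList fun K =>
      perT (Matrix.of fun a b : Fin (n - k) =>
        B (K.1.orderEmbOfFin (Finset.mem_powersetCard.mp K.2).2 a)
          (K.1.orderEmbOfFin (Finset.mem_powersetCard.mp K.2).2 b))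
  else ⊥

/-- multiplicity of x as a 𝕋max-root of the formal polynomial of degree ≤ n
with coefficients Q: for x = ⊥ it is the lower degree, for x = c ∈ Γ it is the
difference between the largest and smallest exponents attaining
max_k (Q_k + k·c). -/
noncomputable def rootMultT (n : ℕ) (Q : ℕ → WithBot Γ) (x : WithBot Γ) : ℕ :=
  WithBot.recBotCoe
    (sInf {k | Q k ≠ ⊥})
    (fun c =>
      sSup {k | k ≤ n ∧ Q k + ((k • c : Γ) : WithBot Γ)
              = sumT (List.range (n+1)) (fun l => Q l + ((l • c : Γ) : WithBot Γ))}
        - sInf {k | k ≤ n ∧ Q k + ((k • c : Γ) : WithBot Γ)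
              = sumT (List.range (n+1)) (fun l => Q l + ((l • c : Γ) : WithBot Γ))})
    x

end Defs

/-- the signed valuation associated with a valuation v on an ordered field L -/
def svMap {Γ : Type} [AddCommGroup Γ] [LinearOrder Γ] [IsOrderedAddMonoid Γ] {L : Type} [Field L] [LinearOrder L] [IsStrictOrderedRing L]
    (v : L → WithBot Γ) (b : L) : Smax Γ :=
  if b = 0 then szero
  else if 0 < b then WithBot.recBotCoe szero (fun c => some (c, SSign.pos)) (v b)
  else WithBot.recBotCoe szero (fun c => some (c, SSign.neg)) (v b)

end TropPaper


/-!
Testing the quadratic form of a tropical positive definite matrix on unit vectors shows that its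
diagonal entries are positive; testing it on vectors supported on two indices shows that
`|aᵢⱼ|² < aᵢᵢ aⱼⱼ`, i.e. the off-diagonal entries lie strictly below the tropical geometric mean
of the diagonal. In a principal submatrix of `γ ⊙ I ⊖ A` the diagonal entries `γ ⊖ aⱼⱼ` have
modulus at least `aⱼⱼ`, so this domination persists: along every cycle of a non-identity
permutation the weight drops strictly, and the determinant is the product of the diagonal. Hence
`((γ ⊙ I ⊖ A)^adj)ᵢᵢ = ⨀_{j ≠ i} (γ ⊖ aⱼⱼ)`, which is never `𝟘` and, for `γ = aₖₖ`, is balanced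
exactly when some `aⱼⱼ` with `j ≠ i` equals `aₖₖ`.
-/

namespace TropPaper

section Modulus

variable {Γ : Type}

lemma smod_eq_bot {a : Smax Γ} : smod a = ⊥ ↔ a = szero := by
  rcases a with _ | ⟨c, s⟩
  · exact iff_of_true rfl rfl
  · exact iff_of_false WithBot.coe_ne_bot (Option.some_ne_none _)

lemma smod_some (c : Γ) (s : SSign) : smod (some (c, s) : Smax Γ) = c := rfl

lemma smod_sneg (a : Smax Γ) : smod (sneg a) = smod a := by
  rcases a with _ | ⟨c, _ | _ | _⟩ <;> rfl

end Modulus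

section Addition

variable {Γ : Type} [LinearOrder Γ]

lemma sadd_of_lt {c d : Γ} (s t : SSign) (h : c < d) :
    sadd (some (c, s)) (some (d, t)) = some (d, t) :=
  if_pos h

lemma sadd_of_gt {c d : Γ} (s t : SSign) (h : d < c) :
    sadd (some (c, s)) (some (d, t)) = some (c, s) :=
  (if_neg (lt_asymm h)).trans (if_pos h)

lemma sadd_same {c : Γ} (s t : SSign) :
    sadd (some (c, s)) (some (c, t)) = some (c, if s = t then s else SSign.bal) :=
  (if_neg (lt_irrefl c)).trans (if_neg (lt_irrefl c))

lemma sadd_szero (a : Smax Γ) : sadd a szero = a := by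
  rcases a with _ | ⟨c, s⟩ <;> rfl

lemma sadd_comm (a b : Smax Γ) : sadd a b = sadd b a := by
  rcases a with _ | ⟨c, s⟩ <;> rcases b with _ | ⟨d, t⟩
  · rfl
  · rfl
  · exact sadd_szero _
  · rcases lt_trichotomy c d with h | rfl | h
    · rw [sadd_of_lt _ _ h, sadd_of_gt _ _ h]
    · rw [sadd_same, sadd_same]
      rcases s <;> rcases t <;> rfl
    · rw [sadd_of_gt _ _ h, sadd_of_lt _ _ h]

lemma sadd_assoc (a b c : Smax Γ) : sadd (sadd a b) c = sadd a (sadd b c) := by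
  rcases a with _ | ⟨x, s⟩
  · rfl
  rcases b with _ | ⟨y, t⟩
  · rfl
  rcases c with _ | ⟨z, u⟩
  · exact (sadd_szero _).trans (congrArg _ (sadd_szero _)).symm
  rcases lt_trichotomy x y with h1 | h1 | h1 <;> rcases lt_trichotomy y z with h2 | h2 | h2
  · simp only [sadd_of_lt _ _ h1, sadd_of_lt _ _ h2, sadd_of_lt _ _ (h1.trans h2)]; rfl
  · subst h2
    simp only [sadd_of_lt _ _ h1, sadd_same]; rfl
  · simp only [sadd_of_lt _ _ h1, sadd_of_gt _ _ h2]; rfl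
  · subst h1
    simp only [sadd_same, sadd_of_lt _ _ h2]; rfl
  · subst h1 h2
    simp only [sadd_same]
    rcases s <;> rcases t <;> rcases u <;> rfl
  · subst h1
    simp only [sadd_same, sadd_of_gt _ _ h2]; rfl
  · rcases lt_trichotomy x z with h3 | rfl | h3
    · simp only [sadd_of_gt _ _ h1, sadd_of_lt _ _ h2, sadd_of_lt _ _ h3]; rfl
    · simp only [sadd_of_gt _ _ h1, sadd_of_lt _ _ h2, sadd_same]; rfl
    · simp only [sadd_of_gt _ _ h1, sadd_of_lt _ _ h2, sadd_of_gt _ _ h3]; rfl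
  · subst h2
    simp only [sadd_of_gt _ _ h1, sadd_same]; rfl
  · simp only [sadd_of_gt _ _ h1, sadd_of_gt _ _ h2, sadd_of_gt _ _ (h2.trans h1)]; rfl

instance : AddCommMonoid (Smax Γ) where
  add := sadd
  zero := szero
  add_assoc := sadd_assoc
  zero_add _ := rfl
  add_zero := sadd_szero
  add_comm := sadd_comm
  nsmul n a := Nat.rec szero (fun _ ih => sadd ih a) n
  nsmul_zero _ := rfl
  nsmul_succ _ _ := rfl

lemma smod_sadd (a b : Smax Γ) : smod (sadd a b) = max (smod a) (smod b) := by
  rcases a with _ | ⟨c, s⟩ <;> rcases b with _ | ⟨d, t⟩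
  · rfl
  · exact (max_eq_right bot_le).symm
  · exact (max_eq_left bot_le).symm
  · rcases lt_trichotomy c d with h | rfl | h
    · rw [sadd_of_lt _ _ h]
      exact (max_eq_right (WithBot.coe_le_coe.2 h.le)).symm
    · rw [sadd_same]
      exact (max_self _).symm
    · rw [sadd_of_gt _ _ h]
      exact (max_eq_left (WithBot.coe_le_coe.2 h.le)).symm

lemma smod_ssub (a b : Smax Γ) : smod (ssub a b) = max (smod a) (smod b) := by
  rw [ssub, smod_sadd, smod_sneg]

lemma smod_sum {α : Type} (s : Finset α) (f : α → Smax Γ) :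
    smod (∑ b ∈ s, f b) = s.sup fun b => smod (f b) := by
  classical
  induction s using Finset.cons_induction with
  | empty => rfl
  | cons a t ha ih => rw [Finset.sum_cons, Finset.sup_cons, ← ih]; exact smod_sadd _ _

lemma sadd_eq_left_of_smod_lt {a b : Smax Γ} (h : smod b < smod a) : sadd a b = a := by
  rcases a with _ | ⟨c, s⟩
  · exact absurd h not_lt_bot
  rcases b with _ | ⟨d, t⟩
  · rfl
  · exact sadd_of_gt _ _ (WithBot.coe_lt_coe.1 h)

lemma sum_eq_of_smod_lt {α : Type} {s : Finset α} {f : α → Smax Γ} {a : α} (ha : a ∈ s)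
    (hne : f a ≠ szero) (hdom : ∀ b ∈ s, b ≠ a → smod (f b) < smod (f a)) :
    ∑ b ∈ s, f b = f a := by
  classical
  rw [← Finset.add_sum_erase s f ha]
  refine sadd_eq_left_of_smod_lt ?_
  rw [smod_sum, Finset.sup_lt_iff (bot_lt_iff_ne_bot.2 (mt smod_eq_bot.1 hne))]
  exact fun b hb => hdom b (Finset.mem_of_mem_erase hb) (Finset.ne_of_mem_erase hb)

lemma not_isPos_sadd {a b : Smax Γ} (ha : ¬ IsPos a) (hb : smod b ≤ smod a) :
    ¬ IsPos (sadd a b) := by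
  rcases a with _ | ⟨c, s⟩
  · exact absurd trivial ha
  rcases b with _ | ⟨d, t⟩
  · exact ha
  rcases (WithBot.coe_le_coe.1 hb).lt_or_eq with h | rfl
  · rwa [sadd_of_gt _ _ h]
  · rw [sadd_same]
    change ¬ s = SSign.pos at ha
    change ¬ (if s = t then s else SSign.bal) = SSign.pos
    split_ifs <;> simp [ha]

lemma not_isPos_sum {α : Type} {s : Finset α} {f : α → Smax Γ} {a : α} (ha : a ∈ s)
    (hfa : ¬ IsPos (f a)) (hmax : ∀ b ∈ s, smod (f b) ≤ smod (f a)) :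
    ¬ IsPos (∑ b ∈ s, f b) := by
  classical
  rw [← Finset.add_sum_erase s f ha]
  refine not_isPos_sadd hfa ?_
  rw [smod_sum]
  exact Finset.sup_le fun b hb => hmax b (Finset.mem_of_mem_erase hb)

lemma ssub_szero (a : Smax Γ) : ssub a szero = a :=
  sadd_szero a

lemma ssub_ne_szero (a : Smax Γ) {b : Smax Γ} (hb : b ≠ szero) : ssub a b ≠ szero := by
  rw [Ne, ← smod_eq_bot, smod_ssub, max_eq_bot]
  exact fun h => hb (smod_eq_bot.1 h.2)

lemma isBal_ssub_iff {a b : Smax Γ} (ha : IsPos a) (hb : IsPos b) :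
    IsBal (ssub a b) ↔ a = b := by
  rcases a with _ | ⟨c, s⟩ <;> rcases b with _ | ⟨d, t⟩
  · exact iff_of_true trivial rfl
  · cases (hb : t = SSign.pos)
    exact iff_of_false nofun nofun
  · cases (ha : s = SSign.pos)
    exact iff_of_false nofun nofun
  · cases (ha : s = SSign.pos)
    cases (hb : t = SSign.pos)
    rcases lt_trichotomy c d with h | rfl | h
    · refine iff_of_false (by simp [ssub, sneg, sadd_of_lt _ _ h, IsBal]) ?_
      rintro ⟨⟩
      exact lt_irrefl c h
    · exact iff_of_true (by simp [ssub, sneg, sadd_same, IsBal]) rfl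
    · refine iff_of_false (by simp [ssub, sneg, sadd_of_gt _ _ h, IsBal]) ?_
      rintro ⟨⟩
      exact lt_irrefl c h

lemma sumS_finRange {m : ℕ} (f : Fin m → Smax Γ) :
    sumS (List.finRange m) f = ∑ i, f i := by
  rw [Fin.sum_univ_def]
  rfl

lemma sumS_toList {α : Type} (s : Finset α) (f : α → Smax Γ) :
    sumS s.toList f = ∑ x ∈ s, f x := by
  rw [Finset.sum, ← Multiset.coe_toList s.val, Multiset.map_coe, Multiset.sum_coe]
  rfl

end Addition

section Multiplication

variable {Γ : Type} [AddCommGroup Γ]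

lemma smod_smul (a b : Smax Γ) : smod (smul a b) = smod a + smod b := by
  rcases a with _ | ⟨c, s⟩ <;> rcases b with _ | ⟨d, t⟩ <;> simp [smul, smod]

lemma smod_sone : smod (sone : Smax Γ) = 0 := rfl

lemma smul_szero (a : Smax Γ) : smul a szero = szero := by
  rcases a with _ | ⟨c, s⟩ <;> rfl

lemma sone_smul (a : Smax Γ) : smul sone a = a := by
  rcases a with _ | ⟨c, s⟩
  · rfl
  · exact congrArg some (Prod.ext (zero_add c) rfl)

lemma smul_sone (a : Smax Γ) : smul a sone = a := by
  rcases a with _ | ⟨c, _ | _ | _⟩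
  · rfl
  all_goals exact congrArg some (Prod.ext (add_zero c) rfl)

lemma smul_ne_szero {a b : Smax Γ} (ha : a ≠ szero) (hb : b ≠ szero) :
    smul a b ≠ szero := by
  rcases a with _ | ⟨c, s⟩
  · exact absurd rfl ha
  rcases b with _ | ⟨d, t⟩
  · exact absurd rfl hb
  · exact Option.some_ne_none _

lemma isBal_smul {a b : Smax Γ} (ha : a ≠ szero) (hb : b ≠ szero) :
    IsBal (smul a b) ↔ IsBal a ∨ IsBal b := by
  rcases a with _ | ⟨c, s⟩
  · exact absurd rfl ha
  rcases b with _ | ⟨d, t⟩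
  · exact absurd rfl hb
  · rcases s <;> rcases t <;> simp [smul, IsBal, sgnMul]

lemma prodS_ne_szero {α : Type} {l : List α} {f : α → Smax Γ}
    (h : ∀ x ∈ l, f x ≠ szero) : prodS l f ≠ szero := by
  induction l with
  | nil => exact Option.some_ne_none _
  | cons x t ih => exact smul_ne_szero (h x (by simp)) (ih fun y hy => h y (by simp [hy]))

lemma smod_prodS {α : Type} (l : List α) (f : α → Smax Γ) :
    smod (prodS l f) = (l.map fun a => smod (f a)).sum := by
  induction l with
  | nil => rfl
  | cons x t ih => exact (smod_smul _ _).trans (congrArg _ ih)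

lemma smod_prodS_finRange {m : ℕ} (f : Fin m → Smax Γ) :
    smod (prodS (List.finRange m) f) = ∑ a, smod (f a) := by
  rw [smod_prodS, Fin.sum_univ_def]

lemma isBal_prodS {α : Type} {l : List α} {f : α → Smax Γ}
    (h : ∀ x ∈ l, f x ≠ szero) :
    IsBal (prodS l f) ↔ ∃ x ∈ l, IsBal (f x) := by
  induction l with
  | nil => exact iff_of_false nofun (by simp)
  | cons x t ih =>
      change IsBal (smul (f x) (prodS t f)) ↔ _
      rw [isBal_smul (h x (by simp)) (prodS_ne_szero fun y hy => h y (by simp [hy])),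
        ih fun y hy => h y (by simp [hy])]
      simp

lemma smod_permSignS {m : ℕ} (π : Equiv.Perm (Fin m)) :
    smod (permSignS π : Smax Γ) = 0 := by
  unfold permSignS
  split_ifs <;> rfl

lemma permSignS_one {m : ℕ} : permSignS (1 : Equiv.Perm (Fin m)) = (sone : Smax Γ) := by
  simp [permSignS]

lemma spow_sneg_sone_add_self (m : ℕ) : spow (sneg (sone : Smax Γ)) (m + m) = sone := by
  induction m with
  | zero => rfl
  | succ p ih =>
      rw [show p + 1 + (p + 1) = p + p + 1 + 1 by omega, spow, spow, ih]
      exact congrArg some (Prod.ext (by simp only [add_zero]) rfl)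

end Multiplication

section Determinant

lemma sum_lt_sum_of_add_self_lt_perm {ι M : Type} [Fintype ι] [AddCommMonoid M] [LinearOrder M]
    [IsOrderedCancelAddMonoid M] (π : Equiv.Perm ι) {u w : ι → M}
    (hle : ∀ a, u a + u a ≤ w a + w (π a)) (hlt : ∃ a, u a + u a < w a + w (π a)) :
    ∑ a, u a < ∑ a, w a := by
  obtain ⟨a, ha⟩ := hlt
  have hsum := Finset.sum_lt_sum (s := Finset.univ) (fun b _ => hle b) ⟨a, Finset.mem_univ a, ha⟩
  rw [Finset.sum_add_distrib, Finset.sum_add_distrib, Equiv.sum_comp π w] at hsum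
  by_contra! h
  exact hsum.not_ge (add_le_add h h)

variable {Γ : Type} [AddCommGroup Γ] [LinearOrder Γ] [IsOrderedAddMonoid Γ]

lemma withBot_sum_lt_sum_of_add_self_lt_perm {ι : Type} [Fintype ι] {π : Equiv.Perm ι}
    (hπ : π ≠ 1) {u w : ι → WithBot Γ} (hw : ∀ a, w a ≠ ⊥)
    (hfix : ∀ a, π a = a → u a = w a) (hmove : ∀ a, π a ≠ a → u a + u a < w a + w (π a)) :
    ∑ a, u a < ∑ a, w a := by
  by_cases hu : ∀ a, u a ≠ ⊥
  · lift u to ι → Γ using hu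
    lift w to ι → Γ using hw
    beta_reduce at hfix hmove
    rw [← WithBot.coe_sum, ← WithBot.coe_sum, WithBot.coe_lt_coe]
    obtain ⟨a, ha⟩ : ∃ a, π a ≠ a := by
      by_contra! h
      exact hπ (Equiv.ext h)
    refine sum_lt_sum_of_add_self_lt_perm π (fun b => ?_) ⟨a, by exact_mod_cast hmove a ha⟩
    by_cases hb : π b = b
    · rw [WithBot.coe_inj.1 (hfix b hb), hb]
    · exact_mod_cast (hmove b hb).le
  · obtain ⟨a, ha⟩ := not_forall_not.1 hu
    rw [WithBot.sum_eq_bot_iff.2 ⟨a, Finset.mem_univ a, ha⟩]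
    exact WithBot.sum_lt_bot fun a _ => hw a

lemma detS_eq_prodS_diag {m : ℕ} {C : Matrix (Fin m) (Fin m) (Smax Γ)}
    (hdiag : ∀ a, C a a ≠ szero)
    (hoff : ∀ a b, a ≠ b → smod (C a b) + smod (C a b) < smod (C a a) + smod (C b b)) :
    detS C = prodS (List.finRange m) fun a => C a a := by
  have hterm : ∀ π : Equiv.Perm (Fin m),
      smod (smul (permSignS π) (prodS (List.finRange m) fun a => C a (π a)))
        = ∑ a, smod (C a (π a)) := fun π => by
    rw [smod_smul, smod_permSignS, zero_add, smod_prodS_finRange]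
  unfold detS
  rw [sumS_toList, sum_eq_of_smod_lt (Finset.mem_univ 1), permSignS_one, sone_smul]
  · rfl
  · rw [permSignS_one, sone_smul]
    exact prodS_ne_szero fun a _ => hdiag a
  · intro π _ hπ
    rw [hterm, hterm]
    exact withBot_sum_lt_sum_of_add_self_lt_perm hπ (fun a => mt smod_eq_bot.1 (hdiag a))
      (fun a ha => by rw [ha]; rfl) (fun a ha => hoff a (π a) (Ne.symm ha))

end Determinant

section PositiveDefinite

variable {Γ : Type} [AddCommGroup Γ] [LinearOrder Γ] {m : ℕ} {A : Matrix (Fin m) (Fin m) (Smax Γ)}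

lemma quadFormS_eq_sum (A : Matrix (Fin m) (Fin m) (Smax Γ)) (x : Fin m → Smax Γ) :
    quadFormS A x = ∑ p, ∑ q, smul (x p) (smul (A p q) (x q)) := by
  simp only [quadFormS, sumS_finRange]

lemma TPD.diag_pos (hTPD : TPD A) (i : Fin m) : ∃ c, A i i = some (c, SSign.pos) := by
  let x : Fin m → Smax Γ := fun p => if p = i then sone else szero
  have hxs : VecSigned x := fun p => by by_cases h : p = i <;> simp [x, h, IsSigned, sone, szero]
  have hx0 : x ≠ zeroVecS := fun h => by simpa [x, zeroVecS, sone, szero] using congrFun h i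
  have hq : quadFormS A x = A i i := by
    have hxi : x i = sone := if_pos rfl
    have hx : ∀ p, p ≠ i → x p = szero := fun p hp => if_neg hp
    rw [quadFormS_eq_sum, Fintype.sum_eq_single i fun p hp =>
        Finset.sum_eq_zero fun q _ => by rw [hx p hp]; rfl,
      Fintype.sum_eq_single i fun q hq => by rw [hx q hq, smul_szero, smul_szero]; rfl,
      hxi, sone_smul, smul_sone]
  obtain ⟨hpos, hne⟩ := hTPD x hxs hx0
  rw [hq, ssub_szero] at hpos hne
  rcases hA : A i i with _ | ⟨c, s⟩
  · exact absurd hA hne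
  · rw [hA] at hpos
    exact ⟨c, by rw [show s = SSign.pos from hpos]⟩

lemma not_isPos_quadFormS_of_pair {i j : Fin m} {x : Fin m → Smax Γ}
    (hx : ∀ p, p ≠ i → p ≠ j → x p = szero)
    (hij : ¬ IsPos (smul (x i) (smul (A i j) (x j))))
    (hii : smod (smul (x i) (smul (A i i) (x i))) ≤ smod (smul (x i) (smul (A i j) (x j))))
    (hji : smod (smul (x j) (smul (A j i) (x i))) ≤ smod (smul (x i) (smul (A i j) (x j))))
    (hjj : smod (smul (x j) (smul (A j j) (x j))) ≤ smod (smul (x i) (smul (A i j) (x j)))) :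
    ¬ IsPos (quadFormS A x) := by
  rw [quadFormS_eq_sum, ← Finset.sum_product']
  refine not_isPos_sum (Finset.mem_univ (i, j)) hij ?_
  rintro ⟨p, q⟩ -
  by_cases hp : p = i ∨ p = j
  · by_cases hq : q = i ∨ q = j
    · rcases hp with rfl | rfl <;> rcases hq with rfl | rfl
      exacts [hii, le_rfl, hji, hjj]
    · rw [not_or] at hq
      rw [hx q hq.1 hq.2, smul_szero, smul_szero]
      exact bot_le
  · rw [not_or] at hp
    rw [hx p hp.1 hp.2]
    exact bot_le

/-- With `d = |aᵢⱼ|` and `cᵢ = aᵢᵢ`, the test vector has `xⱼ = 𝟙` and `xᵢ` of modulus `d - cᵢ`,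
signed so that the term `xᵢ aᵢⱼ xⱼ` is not positive; if `cᵢ + cⱼ ≤ 2d`, that term has maximal
modulus in `xᵀ ⊙ A ⊙ x`. -/
lemma TPD.smod_add_self_lt_of_le [IsOrderedAddMonoid Γ] (hTPD : TPD A) {i j : Fin m} (hij : i ≠ j)
    (hji : smod (A j i) ≤ smod (A i j)) :
    smod (A i j) + smod (A i j) < smod (A i i) + smod (A j j) := by
  obtain ⟨ci, hci⟩ := hTPD.diag_pos i
  obtain ⟨cj, hcj⟩ := hTPD.diag_pos j
  rw [hci, hcj, smod_some, smod_some]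
  rcases hA : A i j with _ | ⟨d, sd⟩
  · exact WithBot.bot_lt_coe (ci + cj)
  rw [hA, smod_some] at hji
  rw [smod_some, ← WithBot.coe_add, ← WithBot.coe_add, WithBot.coe_lt_coe]
  by_contra! hle
  let s : SSign := if sd = SSign.pos then SSign.neg else SSign.pos
  let x : Fin m → Smax Γ := fun p =>
    if p = i then some (d - ci, s) else if p = j then sone else szero
  have hxi : x i = some (d - ci, s) := if_pos rfl
  have hxj : x j = sone := by simp [x, hij.symm]
  have hxs : VecSigned x := fun p => by
    by_cases h1 : p = i
    · rw [h1, hxi]; unfold s; split_ifs <;> simp [IsSigned]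
    by_cases h2 : p = j
    · rw [h2, hxj]; simp [IsSigned, sone]
    simp [x, h1, h2, IsSigned, szero]
  have hx0 : x ≠ zeroVecS := fun h => by simpa [hxi, zeroVecS, szero] using congrFun h i
  have hpos := (hTPD x hxs hx0).1
  rw [ssub_szero] at hpos
  refine not_isPos_quadFormS_of_pair (i := i) (j := j) (fun p h1 h2 => by simp [x, h1, h2])
    ?_ ?_ ?_ ?_ hpos
  · simp only [hxi, hxj, hA]
    rcases sd <;> simp [s, smul, sone, sgnMul, IsPos]
  all_goals
    simp only [smod_smul]
    simp only [hxi, hxj, hA, hci, hcj, smod_some, smod_sone, add_zero, zero_add]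
  · exact_mod_cast (show d - ci + (ci + (d - ci)) = d - ci + d by abel).le
  · rw [add_comm]
    exact add_le_add_right hji _
  · rw [← WithBot.coe_add, WithBot.coe_le_coe, sub_add_eq_add_sub, le_sub_iff_add_le, add_comm]
    exact hle

lemma TPD.smod_add_self_lt [IsOrderedAddMonoid Γ] (hTPD : TPD A) {i j : Fin m} (hij : i ≠ j) :
    smod (A i j) + smod (A i j) < smod (A i i) + smod (A j j) := by
  rcases le_total (smod (A j i)) (smod (A i j)) with h | h
  · exact hTPD.smod_add_self_lt_of_le hij h
  · calc smod (A i j) + smod (A i j) ≤ smod (A j i) + smod (A j i) := add_le_add h h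
      _ < smod (A j j) + smod (A i i) := hTPD.smod_add_self_lt_of_le hij.symm h
      _ = smod (A i i) + smod (A j j) := add_comm _ _

lemma TPD.isPos_diag (hTPD : TPD A) (i : Fin m) : IsPos (A i i) := by
  obtain ⟨c, hc⟩ := hTPD.diag_pos i
  rw [hc]
  rfl

lemma TPD.diag_ne_szero (hTPD : TPD A) (i : Fin m) : A i i ≠ szero := by
  obtain ⟨c, hc⟩ := hTPD.diag_pos i
  rw [hc]
  exact Option.some_ne_none _

lemma charMatS_apply_self (γ : Smax Γ) (A : Matrix (Fin m) (Fin m) (Smax Γ)) (i : Fin m) :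
    charMatS γ A i i = ssub γ (A i i) := by
  simp only [charMatS, idMatS, Matrix.of_apply, if_true, smul_sone]

lemma charMatS_apply_of_ne (γ : Smax Γ) (A : Matrix (Fin m) (Fin m) (Smax Γ)) {i j : Fin m}
    (h : i ≠ j) : charMatS γ A i j = sneg (A i j) := by
  simp only [charMatS, idMatS, Matrix.of_apply, if_neg h, smul_szero]
  rfl

lemma TPD.detS_charMatS_submatrix [IsOrderedAddMonoid Γ] (hTPD : TPD A) (γ : Smax Γ) {l : ℕ}
    {σ : Fin l → Fin m} (hσ : Function.Injective σ) :
    detS (Matrix.of fun a b => charMatS γ A (σ a) (σ b))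
      = prodS (List.finRange l) fun a => ssub γ (A (σ a) (σ a)) := by
  refine (detS_eq_prodS_diag (fun a => ?_) fun a b hab => ?_).trans ?_
  · rw [Matrix.of_apply, charMatS_apply_self]
    exact ssub_ne_szero γ (hTPD.diag_ne_szero _)
  · simp only [Matrix.of_apply, charMatS_apply_self, charMatS_apply_of_ne _ _ (hσ.ne hab),
      smod_sneg, smod_ssub]
    exact (hTPD.smod_add_self_lt (hσ.ne hab)).trans_le
      (add_le_add (le_max_right _ _) (le_max_right _ _))
  · simp only [Matrix.of_apply, charMatS_apply_self]

end PositiveDefinite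

section Adjugate

variable {Γ : Type} [AddCommGroup Γ] [LinearOrder Γ] [IsOrderedAddMonoid Γ] {n : ℕ}
  {A : Matrix (Fin (n + 1)) (Fin (n + 1)) (Smax Γ)}

lemma TPD.adjS_charMatS_apply_self (hTPD : TPD A) (γ : Smax Γ) (i : Fin (n + 1)) :
    adjS (charMatS γ A) i i
      = prodS (List.finRange n) fun j => ssub γ (A (i.succAbove j) (i.succAbove j)) := by
  rw [adjS, Matrix.of_apply, spow_sneg_sone_add_self, sone_smul]
  exact hTPD.detS_charMatS_submatrix γ Fin.succAbove_right_injective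

lemma TPD.adjS_charMatS_apply_self_ne_szero (hTPD : TPD A) (γ : Smax Γ) (i : Fin (n + 1)) :
    adjS (charMatS γ A) i i ≠ szero := by
  rw [hTPD.adjS_charMatS_apply_self]
  exact prodS_ne_szero fun j _ => ssub_ne_szero γ (hTPD.diag_ne_szero _)

lemma TPD.isBal_adjS_charMatS_apply_self_iff (hTPD : TPD A) {γ : Smax Γ} (hγ : IsPos γ)
    (i : Fin (n + 1)) :
    IsBal (adjS (charMatS γ A) i i) ↔ ∃ j, j ≠ i ∧ A j j = γ := by
  rw [hTPD.adjS_charMatS_apply_self,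
    isBal_prodS fun j _ => ssub_ne_szero γ (hTPD.diag_ne_szero _)]
  simp only [isBal_ssub_iff hγ (hTPD.isPos_diag _), List.mem_finRange, true_and]
  constructor
  · rintro ⟨j, hj⟩
    exact ⟨i.succAbove j, Fin.succAbove_ne i j, hj.symm⟩
  · rintro ⟨j, hji, hj⟩
    obtain ⟨l, rfl⟩ := Fin.exists_succAbove_eq hji
    exact ⟨l, hj.symm⟩

end Adjugate

theorem adjugate_diagonal_of_tpd_general {Γ : Type} [AddCommGroup Γ] [LinearOrder Γ] [IsOrderedAddMonoid Γ]
    {n : ℕ}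
    (A : Matrix (Fin (n+1)) (Fin (n+1)) (Smax Γ))
    (hTPD : TPD A) (k : Fin (n+1)) :
    (∀ i, adjS (charMatS (A k k) A) i i ≠ szero) ∧
    (∀ i, i ≠ k → IsBal (adjS (charMatS (A k k) A) i i)) ∧
    (IsBal (adjS (charMatS (A k k) A) k k) ↔ ∃ j, j ≠ k ∧ A j j = A k k) := by
  have hbal := hTPD.isBal_adjS_charMatS_apply_self_iff (hTPD.isPos_diag k)
  exact ⟨hTPD.adjS_charMatS_apply_self_ne_szero _, fun i hik => (hbal i).2 ⟨k, hik.symm, rfl⟩,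
    hbal k⟩

/-- for a TPD matrix with non-increasing diagonal, for
B_k = γ_k⊙I ⊖ A: all diagonal entries of (B_k)^adj are nonzero, those with
index ≠ k are balanced, and the k-th one is balanced iff γ_k is not simple. -/
theorem adjugate_diagonal_of_tpd {Γ : Type} [AddCommGroup Γ] [LinearOrder Γ] [IsOrderedAddMonoid Γ]
    [Nontrivial Γ] (hdiv : DivisibleGrp Γ) {n : ℕ}
    (A : Matrix (Fin (n+1)) (Fin (n+1)) (Smax Γ))
    (hsym : SymmS A) (hsgn : MatSigned A) (hTPD : TPD A)
    (hsort : DiagSortedS A) (k : Fin (n+1)) :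
    (∀ i, adjS (charMatS (A k k) A) i i ≠ szero) ∧
    (∀ i, i ≠ k → IsBal (adjS (charMatS (A k k) A) i i)) ∧
    (IsBal (adjS (charMatS (A k k) A) k k) ↔ ∃ j, j ≠ k ∧ A j j = A k k) :=
  adjugate_diagonal_of_tpd_general A hTPD k

end TropPaper
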